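/- For every general source Y = {Yⁿ}ₙ₌₁^∞ and every δ with 0 ≤ δ < 2, the δ-intrinsic randomness satisfies S_ι(δ|Y) = sup{ R ∈ ℝ : G(R) ≤ δ/2 }, where G(R) = limsup_{n→∞} Pr{ (1/n) log(1/P_{Yⁿ}(Yⁿ)) ≤ R }. -/

import Mathlib

/-!
Converse: a map `φ` onto `M ≥ e^{n(R - ε/2)}` values sends the at most `e^{n(R-ε)}` outcomes of
probability `≥ e^{-n(R-ε)}` into at most that many bins, whose uniform mass is `≤ e^{-nε/2}`; hence
`Pr{(1/n) log (1/P) ≤ R - ε} ≤ d(U_M, φ(Yⁿ))/2 + e^{-nε/2}`.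

Direct: enumerate the outcomes, lay them out as consecutive cells of lengths `P y` in `[0, 1]`, and
send each to the bin `[i/M, (i+1)/M]` containing its left end. Only cells straddling a bin boundary
(at most `M` of them) contribute to the variational distance, each at most twice its mass, so
`d ≤ 2 Pr{P > a} + 2 M a`. With `M ≈ e^{n(R-ε)}` and `a = e^{-n(R-ε/2)}` this is
`2 Pr{(1/n) log (1/P) ≤ R} + o(1)`.

Each direction loses only an arbitrary `ε` in the rate, so the two suprema coincide.
-/

open Filter MeasureTheory
open scoped BigOperators

noncomputable section

/-- Probability of a set under a probability mass function. -/
def prb {α : Type*} (P : α → ℝ) (s : Set α) : ℝ := ∑' a, s.indicator P a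

/-- Variational distance between two mass functions on the same countable set. -/
def varDist {α : Type*} (P Q : α → ℝ) : ℝ := ∑' a, |P a - Q a|

/-- `P` is a probability mass function. -/
def IsPMF {α : Type*} (P : α → ℝ) : Prop := (∀ a, 0 ≤ P a) ∧ HasSum P 1

/-- Pushforward of a mass function through a map. -/
def pushMap {α β : Type*} (P : α → ℝ) (φ : α → β) : β → ℝ :=
  fun b => ∑' a, Set.indicator {a | φ a = b} P a

/-- The uniform mass function on `Fin M`. -/
def unif (M : ℕ) : Fin M → ℝ := fun _ => 1 / (M : ℝ)

open scoped Topology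

namespace IsPMF

variable {α : Type*} {P : α → ℝ}

lemma nonneg (hP : IsPMF P) (a : α) : 0 ≤ P a := hP.1 a

lemma summable (hP : IsPMF P) : Summable P := hP.2.summable

lemma sum_eq_one [Fintype α] (hP : IsPMF P) : ∑ a, P a = 1 :=
  (hasSum_fintype P).unique hP.2

lemma eq_of_subsingleton [Fintype α] [Subsingleton α] {Q : α → ℝ} (hP : IsPMF P) (hQ : IsPMF Q) :
    P = Q := by
  funext a
  have hP1 := hP.sum_eq_one
  have hQ1 := hQ.sum_eq_one
  rw [Fintype.sum_subsingleton _ a] at hP1 hQ1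
  rw [hP1, hQ1]

end IsPMF

section Prb

variable {α : Type*} {P : α → ℝ} {s t : Set α}

lemma prb_nonneg (hP : ∀ a, 0 ≤ P a) (s : Set α) : 0 ≤ prb P s :=
  tsum_nonneg <| Set.indicator_nonneg fun a _ => hP a

lemma prb_mono (hP : IsPMF P) (hst : s ⊆ t) : prb P s ≤ prb P t :=
  (hP.summable.indicator s).tsum_le_tsum (Set.indicator_le_indicator_of_subset hst hP.nonneg)
    (hP.summable.indicator t)

lemma prb_le_one (hP : IsPMF P) (s : Set α) : prb P s ≤ 1 := by
  simpa [prb, hP.2.tsum_eq] using (hP.summable.indicator s).tsum_le_tsum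
    (Set.indicator_le_self' fun a _ => hP.nonneg a) hP.summable

lemma prb_congr (h : ∀ a, P a ≠ 0 → (a ∈ s ↔ a ∈ t)) : prb P s = prb P t := by
  classical
  unfold prb
  refine tsum_congr fun a => ?_
  by_cases ha : P a = 0
  · simp [Set.indicator_apply, ha]
  · simp [Set.indicator_apply, h a ha]

lemma prb_coe_finset (u : Finset α) : prb P u = ∑ a ∈ u, P a := by
  rw [prb, tsum_eq_sum (s := u) fun a ha => Set.indicator_of_notMem ha P]
  exact Finset.sum_congr rfl fun a ha => Set.indicator_of_mem ha P

lemma prb_le_prb_add_ncard_mul (hP : IsPMF P) {C : Set α} (hC : C.Finite) {c : ℝ} (hc : 0 ≤ c) :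
    prb P C ≤ prb P {a | c < P a} + C.ncard * c := by
  classical
  set u := hC.toFinset
  have heavy : ∑ a ∈ u with c < P a, P a ≤ prb P {a | c < P a} := by
    rw [← prb_coe_finset]
    exact prb_mono hP fun a ha => (Finset.mem_filter.mp ha).2
  have light : ∑ a ∈ u with ¬c < P a, P a ≤ C.ncard * c := by
    calc ∑ a ∈ u with ¬c < P a, P a ≤ (u.filter fun a => ¬c < P a).card • c :=
          Finset.sum_le_card_nsmul _ _ _ fun a ha => not_lt.mp (Finset.mem_filter.mp ha).2
      _ ≤ C.ncard * c := by
          rw [nsmul_eq_mul, Set.ncard_eq_toFinset_card C hC]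
          exact mul_le_mul_of_nonneg_right (by exact_mod_cast Finset.card_filter_le _ _) hc
  have hsplit : prb P C = ∑ a ∈ u, P a := by rw [← prb_coe_finset, hC.coe_toFinset]
  rw [hsplit, ← Finset.sum_filter_add_sum_filter_not _ fun a => c < P a]
  linarith

lemma finite_setOf_le (hP : Summable P) {c : ℝ} (hc : 0 < c) : {a | c ≤ P a}.Finite := by
  simpa using Filter.eventually_cofinite.mp
    (hP.tendsto_cofinite_zero.eventually (gt_mem_nhds hc))

end Prb

section PushMap

variable {α β : Type*} {P : α → ℝ}

lemma sum_pushMap (hP : Summable P) (φ : α → β) (A : Finset β) :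
    ∑ b ∈ A, pushMap P φ b = prb P (φ ⁻¹' A) := by
  classical
  simp only [pushMap]
  rw [← Summable.tsum_finsetSum fun b _ => hP.indicator _]
  refine tsum_congr fun a => ?_
  simp only [Set.indicator_apply, Set.mem_ofPred_eq, Finset.sum_ite_eq, Set.mem_preimage,
    Finset.mem_coe]

lemma isPMF_pushMap [Fintype β] (hP : IsPMF P) (φ : α → β) : IsPMF (pushMap P φ) := by
  refine ⟨fun b => prb_nonneg hP.nonneg _, ?_⟩
  convert hasSum_fintype (pushMap P φ)
  rw [sum_pushMap hP.summable, Finset.coe_univ, Set.preimage_univ, prb]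
  simp [hP.2.tsum_eq]

lemma isPMF_unif {M : ℕ} (hM : 0 < M) : IsPMF (unif M) := by
  refine ⟨fun _ => by simp only [unif]; positivity, ?_⟩
  convert hasSum_fintype (unif M)
  simp [unif, hM.ne']

end PushMap

section VarDist

variable {α : Type*} {p q : α → ℝ}

lemma varDist_nonneg (p q : α → ℝ) : 0 ≤ varDist p q :=
  tsum_nonneg fun _ => abs_nonneg _

lemma varDist_le_two (hp : IsPMF p) (hq : IsPMF q) : varDist p q ≤ 2 := by
  have hle : ∀ a, |p a - q a| ≤ p a + q a := fun a =>
    abs_sub_le_iff.mpr ⟨by linarith [hq.nonneg a], by linarith [hp.nonneg a]⟩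
  calc varDist p q ≤ ∑' a, (p a + q a) :=
        ((hp.summable.sub hq.summable).abs).tsum_le_tsum hle (hp.summable.add hq.summable)
    _ = 2 := by rw [(hp.2.add hq.2).tsum_eq]; norm_num

lemma sum_sub_le_half_varDist [Fintype α] (hp : IsPMF p) (hq : IsPMF q) (A : Finset α) :
    ∑ a ∈ A, (q a - p a) ≤ varDist p q / 2 := by
  classical
  have htotal : ∑ a ∈ A, (q a - p a) + ∑ a ∈ Aᶜ, (q a - p a) = 0 := by
    rw [Finset.sum_add_sum_compl, Finset.sum_sub_distrib, hp.sum_eq_one, hq.sum_eq_one, sub_self]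
  have hA : ∑ a ∈ A, (q a - p a) ≤ ∑ a ∈ A, |p a - q a| :=
    Finset.sum_le_sum fun a _ => (le_abs_self _).trans (abs_sub_comm _ _).le
  have hAc : -∑ a ∈ Aᶜ, (q a - p a) ≤ ∑ a ∈ Aᶜ, |p a - q a| := by
    rw [← Finset.sum_neg_distrib]
    exact Finset.sum_le_sum fun a _ => by rw [neg_sub]; exact le_abs_self _
  have hsplit : varDist p q = ∑ a ∈ A, |p a - q a| + ∑ a ∈ Aᶜ, |p a - q a| := by
    rw [varDist, tsum_fintype, Finset.sum_add_sum_compl]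
  linarith

end VarDist

lemma prb_le_half_varDist_add {α : Type*} {P : α → ℝ} {M : ℕ} (hM : 0 < M) (hP : IsPMF P)
    (φ : α → Fin M) {c : ℝ} (hc : 0 < c) :
    prb P {a | c ≤ P a} ≤ varDist (unif M) (pushMap P φ) / 2 + 1 / (c * M) := by
  classical
  have hH := finite_setOf_le hP.summable hc
  set A := hH.toFinset.image φ
  have hcard : (hH.toFinset.card : ℝ) * c ≤ 1 := by
    calc (hH.toFinset.card : ℝ) * c = hH.toFinset.card • c := (nsmul_eq_mul _ _).symm
      _ ≤ ∑ a ∈ hH.toFinset, P a :=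
          Finset.card_nsmul_le_sum _ _ _ fun a ha => hH.mem_toFinset.mp ha
      _ ≤ 1 := by rw [← prb_coe_finset]; exact prb_le_one hP _
  have hAcard : (A.card : ℝ) / M ≤ 1 / (c * M) := by
    have : (A.card : ℝ) ≤ 1 / c := by
      rw [le_div_iff₀ hc]
      exact le_trans (by gcongr; exact_mod_cast Finset.card_image_le) hcard
    calc (A.card : ℝ) / M ≤ 1 / c / M := by gcongr
      _ = 1 / (c * M) := by rw [div_div]
  calc prb P {a | c ≤ P a} ≤ prb P (φ ⁻¹' A) :=
        prb_mono hP fun a ha => Finset.mem_image_of_mem φ (hH.mem_toFinset.mpr ha)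
    _ = ∑ b ∈ A, (pushMap P φ b - unif M b) + A.card / M := by
        simp [← sum_pushMap hP.summable, Finset.sum_sub_distrib, unif, div_eq_mul_inv]
    _ ≤ varDist (unif M) (pushMap P φ) / 2 + 1 / (c * M) :=
        add_le_add (sum_sub_le_half_varDist (isPMF_unif hM) (isPMF_pushMap hP φ) A) hAcard

lemma varDist_le_two_mul_prb {ι β : Type*} [Fintype β] {u v : β → ℝ} {o q : ι → β → ℝ}
    {Q : ι → ℝ} {C : Set ι} (hQ : Summable Q) (ho0 : ∀ k b, 0 ≤ o k b) (hq0 : ∀ k b, 0 ≤ q k b)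
    (ho : ∀ b, HasSum (o · b) (u b)) (hq : ∀ b, HasSum (q · b) (v b))
    (hoQ : ∀ k, ∑ b, o k b = Q k) (hqQ : ∀ k, ∑ b, q k b = Q k) (hC : ∀ k ∉ C, o k = q k) :
    varDist u v ≤ 2 * prb Q C := by
  have habs : ∀ b, Summable fun k => |o k b - q k b| := fun b =>
    ((ho b).summable.sub (hq b).summable).abs
  have hpiece : ∀ k, ∑ b, |o k b - q k b| ≤ 2 * C.indicator Q k := by
    intro k
    by_cases hk : k ∈ C
    · calc ∑ b, |o k b - q k b| ≤ ∑ b, (o k b + q k b) := Finset.sum_le_sum fun b _ =>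
            abs_sub_le_iff.mpr ⟨by linarith [hq0 k b], by linarith [ho0 k b]⟩
        _ = 2 * C.indicator Q k := by
            rw [Finset.sum_add_distrib, hoQ, hqQ, Set.indicator_of_mem hk, two_mul]
    · simp [Set.indicator_of_notMem hk, hC k hk]
  calc varDist u v = ∑ b, |u b - v b| := tsum_fintype _
    _ ≤ ∑ b, ∑' k, |o k b - q k b| := Finset.sum_le_sum fun b _ => by
        have hnorm : Summable fun k => ‖o k b - q k b‖ := by
          simpa only [Real.norm_eq_abs] using habs b
        rw [← ((ho b).sub (hq b)).tsum_eq]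
        simpa only [Real.norm_eq_abs] using norm_tsum_le_tsum_norm hnorm
    _ = ∑' k, ∑ b, |o k b - q k b| := by rw [Summable.tsum_finsetSum fun b _ => habs b]
    _ ≤ ∑' k, 2 * C.indicator Q k :=
        (summable_sum fun b _ => habs b).tsum_le_tsum hpiece ((hQ.indicator C).mul_left 2)
    _ = 2 * prb Q C := tsum_mul_left

section IntervalCode

variable (M : ℕ) (Q : ℕ → ℝ)

def cumMass (k : ℕ) : ℝ := ∑ j ∈ Finset.range k, Q j

/-- The length of `[0, t] ∩ [i / M, (i + 1) / M]`. -/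
def binOverlap (i : ℕ) (t : ℝ) : ℝ := min t ((i + 1) / M) - min t (i / M)

def cellOverlap (k i : ℕ) : ℝ :=
  binOverlap M i (cumMass Q (k + 1)) - binOverlap M i (cumMass Q k)

/-- The bin of the left end of the `k`-th cell; the `min` only acts when `cumMass Q k = 1`, where
all remaining cells are empty. -/
def intervalCode (hM : 0 < M) (k : ℕ) : Fin M := ⟨min ⌊M * cumMass Q k⌋₊ (M - 1), by omega⟩

def crossingSet : Set ℕ := {k | (⌊M * cumMass Q k⌋₊ + 1 : ℝ) / M < cumMass Q (k + 1)}

variable {M Q}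

lemma binOverlap_mono (i : ℕ) : Monotone (binOverlap M i) := by
  intro s t hst
  have : (i : ℝ) / M ≤ (i + 1) / M := by gcongr; linarith
  simp only [binOverlap, min_def]
  split_ifs <;> linarith

lemma continuous_binOverlap (i : ℕ) : Continuous (binOverlap M i) := by
  unfold binOverlap; fun_prop

lemma binOverlap_zero (i : ℕ) : binOverlap M i 0 = 0 := by
  simp only [binOverlap]
  rw [min_eq_left (by positivity), min_eq_left (by positivity), sub_self]

lemma binOverlap_one {i : ℕ} (hi : i < M) : binOverlap M i 1 = 1 / M := by
  have hM : (0 : ℝ) < M := by exact_mod_cast (Nat.zero_le i).trans_lt hi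
  have h1 : ((i : ℝ) + 1) / M ≤ 1 := by
    rw [div_le_one hM]; exact_mod_cast hi
  have h2 : (i : ℝ) / M ≤ 1 := le_trans (by gcongr; linarith) h1
  rw [binOverlap, min_eq_right h1, min_eq_right h2]
  ring

lemma sum_binOverlap (hM : 0 < M) {t : ℝ} (ht0 : 0 ≤ t) (ht1 : t ≤ 1) :
    ∑ i ∈ Finset.range M, binOverlap M i t = t := by
  have hM' : (M : ℝ) ≠ 0 := by positivity
  simp only [binOverlap]
  have := Finset.sum_range_sub (fun i : ℕ => min t ((i : ℝ) / M)) M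
  push_cast at this
  rw [this, div_self hM', min_eq_left ht1, zero_div, min_eq_right ht0, sub_zero]

lemma binOverlap_sub_binOverlap (i : ℕ) {j : ℕ} {s t : ℝ} (hs : j / M ≤ s) (hst : s ≤ t)
    (ht : t ≤ (j + 1) / M) :
    binOverlap M i t - binOverlap M i s = if i = j then t - s else 0 := by
  rcases lt_trichotomy i j with hij | rfl | hij
  · have hi : ((i : ℝ) + 1) / M ≤ j / M := by gcongr; exact_mod_cast hij
    have hi' : (i : ℝ) / M ≤ (i + 1) / M := by gcongr; linarith
    simp only [binOverlap, hij.ne, if_false]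
    rw [min_eq_right (by linarith), min_eq_right (by linarith), min_eq_right (by linarith),
      min_eq_right (by linarith), sub_self]
  · simp only [binOverlap, if_true]
    rw [min_eq_left ht, min_eq_right (hs.trans hst), min_eq_left (hst.trans ht), min_eq_right hs]
    ring
  · have hj : ((j : ℝ) + 1) / M ≤ i / M := by gcongr; exact_mod_cast hij
    have hi' : (i : ℝ) / M ≤ (i + 1) / M := by gcongr; linarith
    simp only [binOverlap, hij.ne', if_false]
    rw [min_eq_left (by linarith), min_eq_left (by linarith), min_eq_left (by linarith),
      min_eq_left (by linarith)]
    ring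

lemma lt_floor_mul_add_one_div (hM : 0 < M) (x : ℝ) : x < (⌊M * x⌋₊ + 1 : ℝ) / M := by
  rw [lt_div_iff₀ (by exact_mod_cast hM), mul_comm]
  exact Nat.lt_floor_add_one _

lemma cumMass_zero : cumMass Q 0 = 0 := Finset.sum_range_zero _

lemma cumMass_succ (k : ℕ) : cumMass Q (k + 1) = cumMass Q k + Q k :=
  Finset.sum_range_succ _ _

variable (hQ : IsPMF Q)
include hQ

lemma cumMass_mono : Monotone (cumMass Q) := fun _ _ hkl =>
  Finset.sum_le_sum_of_subset_of_nonneg (Finset.range_subset_range.mpr hkl)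
    fun j _ _ => hQ.nonneg j

lemma cumMass_nonneg (k : ℕ) : 0 ≤ cumMass Q k :=
  Finset.sum_nonneg fun j _ => hQ.nonneg j

lemma cumMass_le_one (k : ℕ) : cumMass Q k ≤ 1 :=
  sum_le_hasSum _ (fun j _ => hQ.nonneg j) hQ.2

lemma cellOverlap_nonneg (k i : ℕ) : 0 ≤ cellOverlap M Q k i :=
  sub_nonneg.mpr (binOverlap_mono i (cumMass_mono hQ k.le_succ))

lemma hasSum_cellOverlap {i : ℕ} (hi : i < M) : HasSum (cellOverlap M Q · i) (1 / M) := by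
  rw [hasSum_iff_tendsto_nat_of_nonneg (fun k => cellOverlap_nonneg hQ k i)]
  have hpartial : ∀ K, ∑ k ∈ Finset.range K, cellOverlap M Q k i = binOverlap M i (cumMass Q K) :=
    fun K => by
      simp only [cellOverlap]
      rw [Finset.sum_range_sub (fun k => binOverlap M i (cumMass Q k)), cumMass_zero,
        binOverlap_zero, sub_zero]
  simp only [hpartial, ← binOverlap_one hi]
  exact ((continuous_binOverlap i).tendsto 1).comp hQ.2.tendsto_sum_nat

lemma sum_cellOverlap (hM : 0 < M) (k : ℕ) : ∑ b : Fin M, cellOverlap M Q k b = Q k := by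
  rw [Fin.sum_univ_eq_sum_range (cellOverlap M Q k)]
  simp only [cellOverlap]
  rw [Finset.sum_sub_distrib, sum_binOverlap hM (cumMass_nonneg hQ _) (cumMass_le_one hQ _),
    sum_binOverlap hM (cumMass_nonneg hQ _) (cumMass_le_one hQ _), cumMass_succ,
    add_sub_cancel_left]

lemma intervalCode_val (hM : 0 < M) {k : ℕ} (hk : cumMass Q k < 1) :
    (intervalCode M Q hM k : ℕ) = ⌊M * cumMass Q k⌋₊ := by
  have : ⌊M * cumMass Q k⌋₊ < M := by
    rw [Nat.floor_lt (mul_nonneg (Nat.cast_nonneg M) (cumMass_nonneg hQ k))]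
    exact mul_lt_of_lt_one_right (by exact_mod_cast hM) hk
  exact min_eq_left (by omega)

lemma cumMass_lt_one_of_mem_crossingSet (hM : 0 < M) {k : ℕ} (hk : k ∈ crossingSet M Q) :
    cumMass Q k < 1 :=
  ((lt_floor_mul_add_one_div hM _).trans hk).trans_le (cumMass_le_one hQ _)

lemma injOn_intervalCode (hM : 0 < M) : Set.InjOn (intervalCode M Q hM) (crossingSet M Q) := by
  have hmono : StrictMonoOn (fun k => ⌊M * cumMass Q k⌋₊) (crossingSet M Q) := by
    intro k hk l _ hkl
    have hlt : (⌊M * cumMass Q k⌋₊ + 1 : ℝ) < M * cumMass Q l := by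
      rw [← div_lt_iff₀' (by exact_mod_cast hM)]
      exact hk.trans_le (cumMass_mono hQ hkl)
    exact Nat.lt_of_add_one_le (Nat.le_floor (by exact_mod_cast hlt.le))
  intro k hk l hl hkl
  apply hmono.injOn hk hl
  simp only [← intervalCode_val hQ hM (cumMass_lt_one_of_mem_crossingSet hQ hM hk),
    ← intervalCode_val hQ hM (cumMass_lt_one_of_mem_crossingSet hQ hM hl), hkl]

/-- A non-crossing cell lies inside the bin of its left end. -/
lemma cellOverlap_of_notMem_crossingSet (hM : 0 < M) {k : ℕ} (hk : k ∉ crossingSet M Q)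
    (b : Fin M) : cellOverlap M Q k b = if intervalCode M Q hM k = b then Q k else 0 := by
  have hfloor : (⌊M * cumMass Q k⌋₊ : ℝ) / M ≤ cumMass Q k := by
    rw [div_le_iff₀ (by exact_mod_cast hM), mul_comm (cumMass Q k)]
    exact Nat.floor_le (mul_nonneg (Nat.cast_nonneg M) (cumMass_nonneg hQ k))
  rw [cellOverlap, binOverlap_sub_binOverlap b hfloor (cumMass_mono hQ k.le_succ) (not_lt.mp hk),
    cumMass_succ, add_sub_cancel_left]
  rcases lt_or_ge (cumMass Q k) 1 with hk1 | hk1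
  · simp only [Fin.ext_iff, intervalCode_val hQ hM hk1, eq_comm]
  · have : Q k = 0 := by
      linarith [cumMass_le_one hQ (k + 1), cumMass_succ (Q := Q) k, hQ.nonneg k]
    simp [this]

lemma varDist_unif_pushMap_intervalCode_le (hM : 0 < M) {a : ℝ} (ha : 0 ≤ a) :
    varDist (unif M) (pushMap Q (intervalCode M Q hM)) ≤ 2 * prb Q {k | a < Q k} + 2 * M * a := by
  classical
  have hinj := injOn_intervalCode hQ hM
  have hfin : (crossingSet M Q).Finite :=
    Set.Finite.of_injOn (Set.mapsTo_univ _ _) hinj Set.finite_univ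
  have hcard : ((crossingSet M Q).ncard : ℝ) ≤ M := by
    have := Set.ncard_le_ncard_of_injOn _ (fun _ _ => Set.mem_univ _) hinj Set.finite_univ
    rw [Set.ncard_univ, Nat.card_eq_fintype_card, Fintype.card_fin] at this
    exact_mod_cast this
  have hcode : ∀ b, HasSum (fun k => if intervalCode M Q hM k = b then Q k else 0)
      (pushMap Q (intervalCode M Q hM) b) := fun b => by
    have heq : {k | intervalCode M Q hM k = b}.indicator Q =
        fun k => if intervalCode M Q hM k = b then Q k else 0 :=
      funext fun k => by simp [Set.indicator_apply]
    exact heq ▸ (hQ.summable.indicator _).hasSum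
  calc varDist (unif M) (pushMap Q (intervalCode M Q hM)) ≤ 2 * prb Q (crossingSet M Q) :=
        varDist_le_two_mul_prb hQ.summable (fun k b => cellOverlap_nonneg hQ k b)
          (fun k b => by split_ifs <;> simp [hQ.nonneg k])
          (fun b => hasSum_cellOverlap hQ b.isLt) hcode (sum_cellOverlap hQ hM)
          (fun k => by simp) (fun k hk => funext (cellOverlap_of_notMem_crossingSet hQ hM hk))
    _ ≤ 2 * (prb Q {k | a < Q k} + (crossingSet M Q).ncard * a) := by
        gcongr; exact prb_le_prb_add_ncard_mul hQ hfin ha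
    _ ≤ 2 * prb Q {k | a < Q k} + 2 * M * a := by nlinarith

end IntervalCode

lemma prb_extend {α β : Type*} {e : α → β} (he : e.Injective) (P : α → ℝ) (s : Set β) :
    prb (Function.extend e P 0) s = prb P (e ⁻¹' s) := by
  classical
  have hind :
      s.indicator (Function.extend e P 0) = Function.extend e ((e ⁻¹' s).indicator P) 0 := by
    funext y
    by_cases hy : ∃ x, e x = y
    · obtain ⟨x, rfl⟩ := hy
      simp [Set.indicator_apply, he.extend_apply]
    · simp [Function.extend_apply' _ _ _ hy]
  rw [prb, hind, tsum_extend_zero he, prb]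

lemma exists_varDist_unif_pushMap_le {α : Type*} [Countable α] {P : α → ℝ} (hP : IsPMF P)
    {M : ℕ} (hM : 0 < M) {a : ℝ} (ha : 0 ≤ a) :
    ∃ φ : α → Fin M, varDist (unif M) (pushMap P φ) ≤ 2 * prb P {y | a < P y} + 2 * M * a := by
  obtain ⟨e, he⟩ := exists_injective_nat α
  set Q := Function.extend e P 0
  have hQe : ∀ y, Q (e y) = P y := fun y => he.extend_apply P 0 y
  have hQ : IsPMF Q := by
    refine ⟨fun k => ?_, (hasSum_extend_zero he).mpr hP.2⟩
    by_cases hk : ∃ y, e y = k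
    · obtain ⟨y, rfl⟩ := hk
      exact (hQe y).symm ▸ hP.nonneg y
    · simp [Q, Function.extend_apply' _ _ _ hk]
  refine ⟨intervalCode M Q hM ∘ e, ?_⟩
  have hpush : pushMap P (intervalCode M Q hM ∘ e) = pushMap Q (intervalCode M Q hM) :=
    funext fun b => (prb_extend he P {k | intervalCode M Q hM k = b}).symm
  have hheavy : prb P {y | a < P y} = prb Q {k | a < Q k} := by
    rw [prb_extend he]
    simp only [Set.preimage_ofPred_eq, hQe]
  rw [hpush, hheavy]
  exact varDist_unif_pushMap_intervalCode_le hQ hM ha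

lemma limsup_le_mul_of_eventually_le {u v r : ℕ → ℝ} {c L : ℝ} (hc : 0 ≤ c)
    (hu : IsBoundedUnder (· ≥ ·) atTop u) (hv : IsBoundedUnder (· ≤ ·) atTop v)
    (hvL : limsup v atTop ≤ L) (hr : Tendsto r atTop (𝓝 0))
    (h : ∀ᶠ n in atTop, u n ≤ c * v n + r n) : limsup u atTop ≤ c * L := by
  refine le_of_forall_pos_le_add fun η hη => ?_
  have hη' : 0 < η / (c + 1) := by positivity
  have hv' : ∀ᶠ n in atTop, v n < L + η / (c + 1) := eventually_lt_of_limsup_lt (by linarith) hv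
  have hr' : ∀ᶠ n in atTop, r n < η / (c + 1) := hr.eventually (gt_mem_nhds hη')
  refine limsup_le_of_le hu.isCoboundedUnder_le ?_
  filter_upwards [h, hv', hr'] with n hn hvn hrn
  calc u n ≤ c * v n + r n := hn
    _ ≤ c * (L + η / (c + 1)) + η / (c + 1) := by gcongr
    _ = c * L + η := by field_simp; ring

lemma tendsto_log_ceil_exp_div {r : ℝ} (hr : 0 ≤ r) :
    Tendsto (fun n : ℕ => 1 / (n : ℝ) * Real.log ⌈Real.exp (n * r)⌉₊) atTop (𝓝 r) := by
  have hupper : Tendsto (fun n : ℕ => r + Real.log 2 / n) atTop (𝓝 r) := by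
    simpa using tendsto_const_nhds.add (tendsto_const_div_atTop_nhds_zero_nat (Real.log 2))
  refine tendsto_of_tendsto_of_tendsto_of_le_of_le' tendsto_const_nhds hupper ?_ ?_
  all_goals
    filter_upwards [eventually_gt_atTop 0] with n hn
    have hn' : (0 : ℝ) < n := by exact_mod_cast hn
    have hx : 1 ≤ Real.exp (n * r) := Real.one_le_exp (by positivity)
    have hlow : n * r ≤ Real.log ⌈Real.exp (n * r)⌉₊ := by
      rw [Real.le_log_iff_exp_le (by positivity)]
      exact Nat.le_ceil _
    have hup : Real.log ⌈Real.exp (n * r)⌉₊ ≤ Real.log 2 + n * r := by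
      calc Real.log ⌈Real.exp (n * r)⌉₊ ≤ Real.log (2 * Real.exp (n * r)) :=
            Real.log_le_log (by positivity)
              (Nat.ceil_le_two_mul (a := Real.exp (n * r)) (by norm_num; linarith))
        _ = Real.log 2 + n * r := by
            rw [Real.log_mul two_ne_zero (Real.exp_pos _).ne', Real.log_exp]
  · calc r = 1 / n * (n * r) := by field_simp
      _ ≤ 1 / n * Real.log ⌈Real.exp (n * r)⌉₊ := by gcongr
  · calc 1 / n * Real.log ⌈Real.exp (n * r)⌉₊ ≤ 1 / n * (Real.log 2 + n * r) := by gcongr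
      _ = r + Real.log 2 / n := by field_simp; ring

lemma prb_selfInfo_le {α : Type*} {P : α → ℝ} (hP : ∀ a, 0 ≤ P a) {n : ℕ} (hn : 0 < n) (R : ℝ) :
    prb P {y | 1 / (n : ℝ) * Real.log (1 / P y) ≤ R} = prb P {y | Real.exp (-(n * R)) ≤ P y} := by
  -- points with `P y = 0`, where `log (1 / 0) = 0` is a junk value, carry no mass
  refine prb_congr fun y hy => ?_
  have hpos : 0 < P y := (hP y).lt_of_ne' hy
  have hn' : (0 : ℝ) < n := by exact_mod_cast hn
  simp only [Set.mem_ofPred_eq, one_div, Real.log_inv, ← Real.le_log_iff_exp_le hpos]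
  rw [inv_mul_le_iff₀ hn']
  constructor <;> intro h <;> linarith

lemma tendsto_exp_neg_natCast_mul {c : ℝ} (hc : 0 < c) :
    Tendsto (fun n : ℕ => Real.exp (-(n * c))) atTop (𝓝 0) :=
  Real.tendsto_exp_neg_atTop_nhds_zero.comp (tendsto_natCast_atTop_atTop.atTop_mul_const hc)

section Achievability

variable {𝒴 : ℕ → Type*} {P : ∀ n, 𝒴 n → ℝ} {δ R ε : ℝ}

def IsAchievableRate (P : ∀ n, 𝒴 n → ℝ) (δ R : ℝ) : Prop :=
  ∃ M : ℕ → ℕ, (∀ n, 0 < M n) ∧ ∃ φ : ∀ n, 𝒴 n → Fin (M n),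
    R ≤ liminf (fun n : ℕ => (1 / (n : ℝ)) * Real.log (M n)) atTop ∧
    limsup (fun n : ℕ => varDist (unif (M n)) (pushMap (P n) (φ n))) atTop ≤ δ

/-- `Pr{(1/n) log (1/P_{Yⁿ}(Yⁿ)) ≤ R}`; its `limsup` in `n` is the function `G(R)`. -/
def selfInfoCDF (P : ∀ n, 𝒴 n → ℝ) (n : ℕ) (R : ℝ) : ℝ :=
  prb (P n) {y | (1 / (n : ℝ)) * Real.log (1 / P n y) ≤ R}

lemma limsup_selfInfoCDF_le (hP : ∀ n, IsPMF (P n)) (h : IsAchievableRate P δ R) (hε : 0 < ε) :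
    limsup (fun n => selfInfoCDF P n (R - ε)) atTop ≤ δ / 2 := by
  obtain ⟨M, hM, φ, hlim, hvar⟩ := h
  have hrate : ∀ᶠ n : ℕ in atTop, R - ε / 2 < (1 / (n : ℝ)) * Real.log (M n) := by
    refine eventually_lt_of_lt_liminf (by linarith) ⟨0, eventually_map.mpr (.of_forall ?_)⟩
    exact fun n => mul_nonneg (by positivity) (Real.log_nonneg (by exact_mod_cast hM n))
  rw [div_eq_inv_mul]
  refine limsup_le_mul_of_eventually_le (by norm_num)
    ⟨0, eventually_map.mpr (.of_forall fun n => prb_nonneg (hP n).nonneg _)⟩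
    ⟨2, eventually_map.mpr (.of_forall fun n =>
      varDist_le_two (isPMF_unif (hM n)) (isPMF_pushMap (hP n) (φ n)))⟩ hvar
    (tendsto_exp_neg_natCast_mul (half_pos hε)) ?_
  filter_upwards [hrate, eventually_gt_atTop 0] with n hn hn0
  have hn' : (0 : ℝ) < n := by exact_mod_cast hn0
  have hMn : Real.exp (n * (R - ε / 2)) < M n := by
    rw [← Real.lt_log_iff_exp_lt (by exact_mod_cast hM n)]
    rwa [one_div, lt_inv_mul_iff₀ hn'] at hn
  calc selfInfoCDF P n (R - ε) = prb (P n) {y | Real.exp (-(n * (R - ε))) ≤ P n y} :=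
        prb_selfInfo_le (hP n).nonneg hn0 _
    _ ≤ varDist (unif (M n)) (pushMap (P n) (φ n)) / 2 + 1 / (Real.exp (-(n * (R - ε))) * M n) :=
        prb_le_half_varDist_add (hM n) (hP n) (φ n) (Real.exp_pos _)
    _ ≤ 2⁻¹ * varDist (unif (M n)) (pushMap (P n) (φ n)) + Real.exp (-(n * (ε / 2))) := by
        have hrem : 1 / (Real.exp (-(n * (R - ε))) * M n) ≤ Real.exp (-(n * (ε / 2))) := by
          rw [div_le_iff₀ (by have := hM n; positivity)]
          calc (1 : ℝ) = Real.exp (-(n * (R - ε / 2))) * Real.exp (n * (R - ε / 2)) := by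
                rw [← Real.exp_add, neg_add_cancel, Real.exp_zero]
            _ ≤ Real.exp (-(n * (R - ε / 2))) * M n := by gcongr
            _ = Real.exp (-(n * (ε / 2))) * (Real.exp (-(n * (R - ε))) * M n) := by
                rw [← mul_assoc, ← Real.exp_add]; ring_nf
        linarith

lemma isAchievableRate_of_nonpos (hP : ∀ n, IsPMF (P n)) (hδ : 0 ≤ δ) (hR : R ≤ 0) :
    IsAchievableRate P δ R := by
  refine ⟨fun _ => 1, fun _ => one_pos, fun n _ => 0, by simpa using hR, ?_⟩
  have hunif : ∀ n, pushMap (P n) (fun _ => (0 : Fin 1)) = unif 1 := fun n =>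
    (isPMF_pushMap (hP n) _).eq_of_subsingleton (isPMF_unif one_pos)
  simpa [hunif, varDist] using hδ

lemma isAchievableRate_sub [∀ n, Countable (𝒴 n)] (hP : ∀ n, IsPMF (P n))
    (hR : limsup (fun n => selfInfoCDF P n R) atTop ≤ δ / 2) (hε : 0 < ε) (hRε : 0 < R - ε) :
    IsAchievableRate P δ (R - ε) := by
  set M : ℕ → ℕ := fun n => ⌈Real.exp (n * (R - ε))⌉₊
  have hM : ∀ n, 0 < M n := fun n => Nat.ceil_pos.mpr (Real.exp_pos _)
  set a : ℕ → ℝ := fun n => Real.exp (-(n * (R - ε / 2)))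
  choose φ hφ using fun n => exists_varDist_unif_pushMap_le (hP n) (hM n) (Real.exp_pos _).le
    (a := a n)
  refine ⟨M, hM, φ, (tendsto_log_ceil_exp_div hRε.le).liminf_eq.ge, ?_⟩
  rw [show δ = 2 * (δ / 2) by ring]
  refine limsup_le_mul_of_eventually_le zero_le_two
    ⟨0, eventually_map.mpr (.of_forall fun n => varDist_nonneg _ _)⟩
    ⟨1, eventually_map.mpr (.of_forall fun n => prb_le_one (hP n) _)⟩ hR
    (by simpa using (tendsto_exp_neg_natCast_mul (half_pos hε)).const_mul 4) ?_
  filter_upwards [eventually_gt_atTop 0] with n hn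
  have hn' : (0 : ℝ) < n := by exact_mod_cast hn
  have hheavy : prb (P n) {y | a n < P n y} ≤ selfInfoCDF P n R := by
    rw [selfInfoCDF, prb_selfInfo_le (hP n).nonneg hn]
    refine prb_mono (hP n) fun y hy => le_trans (Real.exp_le_exp.mpr ?_) (le_of_lt hy)
    nlinarith
  have hsize : M n * a n ≤ 2 * Real.exp (-(n * (ε / 2))) := by
    calc M n * a n ≤ 2 * Real.exp (n * (R - ε)) * a n := by
          gcongr
          refine Nat.ceil_le_two_mul (le_trans (by norm_num) (Real.one_le_exp ?_))
          positivity
      _ = 2 * Real.exp (-(n * (ε / 2))) := by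
          rw [mul_assoc, ← Real.exp_add]; ring_nf
  calc varDist (unif (M n)) (pushMap (P n) (φ n))
        ≤ 2 * prb (P n) {y | a n < P n y} + 2 * M n * a n := hφ n
    _ ≤ 2 * selfInfoCDF P n R + 4 * Real.exp (-(n * (ε / 2))) := by nlinarith

end Achievability

lemma csSup_le_csSup_of_forall_sub_mem {S T : Set ℝ} (hS : S.Nonempty) (hT : BddAbove T)
    (h : ∀ R ∈ S, ∀ ε > 0, R - ε ∈ T) : sSup S ≤ sSup T :=
  csSup_le hS fun R hR => le_of_forall_pos_le_add fun ε hε => by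
    linarith [le_csSup hT (h R hR ε hε)]

lemma sSup_eq_of_forall_sub_mem {S T : Set ℝ} (hST : ∀ R ∈ S, ∀ ε > 0, R - ε ∈ T)
    (hTS : ∀ R ∈ T, ∀ ε > 0, R - ε ∈ S) : sSup S = sSup T := by
  have bdd : ∀ {A B : Set ℝ}, (∀ R ∈ A, ∀ ε > 0, R - ε ∈ B) → BddAbove B → BddAbove A :=
    fun hAB ⟨c, hc⟩ => ⟨c + 1, fun R hR => by linarith [hc (hAB R hR 1 one_pos)]⟩
  rcases S.eq_empty_or_nonempty with rfl | hS
  · rcases T.eq_empty_or_nonempty with rfl | ⟨R, hR⟩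
    · rfl
    · exact absurd (hTS R hR 1 one_pos) (Set.notMem_empty _)
  have hT : T.Nonempty := let ⟨R, hR⟩ := hS; ⟨R - 1, hST R hR 1 one_pos⟩
  by_cases hbdd : BddAbove T
  · exact le_antisymm (csSup_le_csSup_of_forall_sub_mem hS hbdd hST)
      (csSup_le_csSup_of_forall_sub_mem hT (bdd hST hbdd) hTS)
  · rw [Real.sSup_of_not_bddAbove hbdd, Real.sSup_of_not_bddAbove fun h => hbdd (bdd hTS h)]

theorem first_order_intrinsic_randomness_general
    (𝒴 : ℕ → Type*) [∀ n, Countable (𝒴 n)]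
    (P : ∀ n, 𝒴 n → ℝ) (hP : ∀ n, IsPMF (P n))
    (δ : ℝ) (hδ0 : 0 ≤ δ) :
    sSup {R : ℝ | ∃ M : ℕ → ℕ, (∀ n, 0 < M n) ∧ ∃ φ : ∀ n, 𝒴 n → Fin (M n),
        R ≤ Filter.liminf (fun n : ℕ => (1 / (n : ℝ)) * Real.log (M n)) Filter.atTop ∧
        Filter.limsup (fun n : ℕ =>
          varDist (unif (M n)) (pushMap (P n) (φ n))) Filter.atTop ≤ δ}
      =
    sSup {R : ℝ | Filter.limsup (fun n : ℕ =>
        prb (P n) {y | (1 / (n : ℝ)) * Real.log (1 / P n y) ≤ R}) Filter.atTop ≤ δ / 2} := by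
  refine sSup_eq_of_forall_sub_mem (fun R hR ε hε => limsup_selfInfoCDF_le hP hR hε)
    fun R hR ε hε => ?_
  by_cases hRε : 0 < R - ε
  · exact isAchievableRate_sub hP hR hε hRε
  · exact isAchievableRate_of_nonpos hP hδ0 (not_lt.mp hRε)

/-- First-order intrinsic randomness theorem (Han): for every general source
`Y = {Yⁿ}` and every `0 ≤ δ < 2`, the δ-intrinsic randomness `S_ι(δ|Y)` equals
`sup { R | G(R) ≤ δ/2 }` where `G(R) = limsup_n Pr{ (1/n) log(1/P_{Yⁿ}(Yⁿ)) ≤ R }`. -/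
theorem first_order_intrinsic_randomness
    (𝒴 : ℕ → Type*) [∀ n, Countable (𝒴 n)]
    (P : ∀ n, 𝒴 n → ℝ) (hP : ∀ n, IsPMF (P n))
    (δ : ℝ) (hδ0 : 0 ≤ δ) (hδ2 : δ < 2) :
    sSup {R : ℝ | ∃ M : ℕ → ℕ, (∀ n, 0 < M n) ∧ ∃ φ : ∀ n, 𝒴 n → Fin (M n),
        R ≤ Filter.liminf (fun n : ℕ => (1 / (n : ℝ)) * Real.log (M n)) Filter.atTop ∧
        Filter.limsup (fun n : ℕ =>
          varDist (unif (M n)) (pushMap (P n) (φ n))) Filter.atTop ≤ δ}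
      =
    sSup {R : ℝ | Filter.limsup (fun n : ℕ =>
        prb (P n) {y | (1 / (n : ℝ)) * Real.log (1 / P n y) ≤ R}) Filter.atTop ≤ δ / 2} :=
  first_order_intrinsic_randomness_general 𝒴 P hP δ hδ0
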